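/- If a = 1 ∨ φ(1) for a normal completely positive map φ on a finite von Neumann algebra M with faithful normal trace τ, then ‖a^{-1/2} − 1‖₂ ≤ ‖φ(1) − 1‖₂^{1/2}. -/

import Mathlib

/- Common framework: a finite von Neumann algebra `M` on a Hilbert space `H` with a faithful
normal trace, normal completely positive maps, bimodular maps, and the `2`-norm. -/

open scoped ComplexOrder InnerProductSpace
open Filter Topology

noncomputable section

universe u

variable (H : Type u) [NormedAddCommGroup H] [InnerProductSpace ℂ H] [CompleteSpace H]

/-- The `2`-norm `‖x‖₂ = τ(x*x)^{1/2}` associated to a trace functional `τ`. -/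
def twoNorm (τ : (H →L[ℂ] H) →ₗ[ℂ] ℂ) (x : H →L[ℂ] H) : ℝ :=
  Real.sqrt (τ (star x * x)).re

/-- A linear functional on `B(H)` is normal (relative to the von Neumann algebra `M`) if it is
continuous for the weak operator topology on bounded balls of `M`. -/
def IsNormalFunctional (M : VonNeumannAlgebra H) (τ : (H →L[ℂ] H) →ₗ[ℂ] ℂ) : Prop :=
  ∀ r : ℝ, ContinuousOn
    (fun T : H →WOT[ℂ] H => τ ((ContinuousLinearMapWOT.linearEquiv (σ := RingHom.id ℂ) (E := H) (F := H) ℂ).symm.symm T))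
    ((ContinuousLinearMapWOT.linearEquiv (σ := RingHom.id ℂ) (E := H) (F := H) ℂ).symm '' (Metric.closedBall 0 r ∩ (M : Set (H →L[ℂ] H))))

/-- A faithful normal tracial state on a von Neumann algebra `M ⊆ B(H)`. -/
structure FaithfulNormalTrace (M : VonNeumannAlgebra H) where
  τ : (H →L[ℂ] H) →ₗ[ℂ] ℂ
  pos : ∀ x ∈ M, 0 ≤ τ (star x * x)
  faithful : ∀ x ∈ M, τ (star x * x) = 0 → x = 0
  tracial : ∀ x ∈ M, ∀ y ∈ M, τ (x * y) = τ (y * x)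
  unital : τ 1 = 1
  normal : IsNormalFunctional H M τ

/-- A linear map `φ : B(H) → B(H)` is normal (as a map of the von Neumann algebra `M`) if it is
continuous for the weak operator topology on bounded balls of `M`. -/
def IsNormalMap (M : VonNeumannAlgebra H) (φ : (H →L[ℂ] H) →ₗ[ℂ] (H →L[ℂ] H)) : Prop :=
  ∀ r : ℝ, ContinuousOn
    (fun T : H →WOT[ℂ] H =>
      (ContinuousLinearMapWOT.linearEquiv (σ := RingHom.id ℂ) (E := H) (F := H) ℂ).symm (φ ((ContinuousLinearMapWOT.linearEquiv (σ := RingHom.id ℂ) (E := H) (F := H) ℂ).symm.symm T)))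
    ((ContinuousLinearMapWOT.linearEquiv (σ := RingHom.id ℂ) (E := H) (F := H) ℂ).symm '' (Metric.closedBall 0 r ∩ (M : Set (H →L[ℂ] H))))

/-- Complete positivity of `φ` on `M`: for all `x₁, …, xₙ ∈ M` and `ξ₁, …, ξₙ ∈ H`,
`∑_{i,j} ⟨ξᵢ, φ(xᵢ* xⱼ) ξⱼ⟩ ≥ 0`. -/
def IsCompletelyPositive (M : VonNeumannAlgebra H)
    (φ : (H →L[ℂ] H) →ₗ[ℂ] (H →L[ℂ] H)) : Prop :=
  ∀ (n : ℕ) (x : Fin n → (H →L[ℂ] H)) (ξ : Fin n → H), (∀ i, x i ∈ M) →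
    0 ≤ ∑ i, ∑ j, ⟪ξ i, φ (star (x i) * x j) (ξ j)⟫_ℂ

/-- `φ` is a normal completely positive map from `M` to `M`. -/
def IsNormalCP (M : VonNeumannAlgebra H) (φ : (H →L[ℂ] H) →ₗ[ℂ] (H →L[ℂ] H)) : Prop :=
  (∀ x ∈ M, φ x ∈ M) ∧ IsNormalMap H M φ ∧ IsCompletelyPositive H M φ

/-- `N`-bimodularity of a map `φ : M → M`: `φ(axb) = aφ(x)b` for `a, b ∈ N`, `x ∈ M`. -/
def IsBimodular (M N : VonNeumannAlgebra H) (φ : (H →L[ℂ] H) →ₗ[ℂ] (H →L[ℂ] H)) : Prop :=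
  ∀ a ∈ N, ∀ b ∈ N, ∀ x ∈ M, φ (a * x * b) = a * φ x * b


/-!
Put `b = φ(1)`, which is self-adjoint by complete positivity, and `f(t) = max(1, t)^{-1/2}`.
For real `t` one has `(f(t) - 1)² ≤ |t - 1|`, so by monotonicity of `τ` along the functional
calculus `‖a^{-1/2} - 1‖₂² ≤ τ(|b - 1|)`. By Cauchy–Schwarz for the state `τ`,
`τ(|b - 1|) ≤ τ(|b - 1|²)^{1/2} = ‖b - 1‖₂`.
-/

variable {H}

theorem VonNeumannAlgebra.isClosed (M : VonNeumannAlgebra H) :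
    IsClosed (M : Set (H →L[ℂ] H)) := by
  rw [← M.centralizer_centralizer]
  exact Set.isClosed_centralizer _

theorem VonNeumannAlgebra.cfc_mem (M : VonNeumannAlgebra H) (f : ℝ → ℝ) {b : H →L[ℂ] H}
    (hb : b ∈ M) : cfc f b ∈ M :=
  _root_.cfc_mem (𝕜' := ℂ) (s := M.toStarSubalgebra) (hs := M.isClosed) f hb

theorem VonNeumannAlgebra.sqrt_mem (M : VonNeumannAlgebra H) {x : H →L[ℂ] H} (hxM : x ∈ M)
    (hx : 0 ≤ x) : CFC.sqrt x ∈ M := by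
  rw [CFC.sqrt_eq_real_sqrt x hx]
  exact cfcₙ_mem (𝕜' := ℂ) (s := M.toStarSubalgebra) (hs := M.isClosed) _ hxM

theorem IsCompletelyPositive.isPositive_map_star_mul_self {M : VonNeumannAlgebra H}
    {φ : (H →L[ℂ] H) →ₗ[ℂ] (H →L[ℂ] H)} (hφ : IsCompletelyPositive H M φ)
    {x : H →L[ℂ] H} (hx : x ∈ M) : (φ (star x * x)).IsPositive := by
  refine (ContinuousLinearMap.isPositive_iff_complex _).2 fun ξ => ?_
  have h : 0 ≤ ⟪φ (star x * x) ξ, ξ⟫_ℂ := by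
    rw [← inner_conj_symm]
    exact star_nonneg_iff.2 (by simpa using hφ 1 (fun _ => x) (fun _ => ξ) (fun _ => hx))
  obtain ⟨r, hr, hrξ⟩ := RCLike.nonneg_iff_exists_ofReal.1 h
  simp [← hrξ, hr]

theorem cfc_sq_eq_star_mul_self {A : Type*} [Ring A] [StarRing A] [TopologicalSpace A]
    [Algebra ℝ A] [ContinuousFunctionalCalculus ℝ A IsSelfAdjoint] (g : ℝ → ℝ) (a : A)
    (hg : ContinuousOn g (spectrum ℝ a) := by cfc_cont_tac) :
    cfc (fun t => g t ^ 2) a = star (cfc g a) * cfc g a := by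
  simp only [sq]
  rw [cfc_mul g g a, (cfc_predicate g a).star_eq]

theorem twoNorm_cfc (τ : (H →L[ℂ] H) →ₗ[ℂ] ℂ) (g : ℝ → ℝ) (b : H →L[ℂ] H)
    (hg : ContinuousOn g (spectrum ℝ b) := by cfc_cont_tac) :
    twoNorm H τ (cfc g b) = √(τ (cfc (fun t => g t ^ 2) b)).re := by
  rw [twoNorm, cfc_sq_eq_star_mul_self g b]

namespace FaithfulNormalTrace

variable {M : VonNeumannAlgebra H} (tr : FaithfulNormalTrace H M)

theorem re_nonneg_star_mul_self {x : H →L[ℂ] H} (hx : x ∈ M) :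
    0 ≤ (tr.τ (star x * x)).re :=
  (Complex.le_def.1 (tr.pos x hx)).1

theorem re_nonneg {x : H →L[ℂ] H} (hxM : x ∈ M) (hx : 0 ≤ x) : 0 ≤ (tr.τ x).re := by
  have hsqrt : star (CFC.sqrt x) * CFC.sqrt x = x := by
    rw [(CFC.sqrt_nonneg x).isSelfAdjoint.star_eq, CFC.sqrt_mul_sqrt_self x hx]
  simpa only [hsqrt] using tr.re_nonneg_star_mul_self (M.sqrt_mem hxM hx)

theorem re_mono {x y : H →L[ℂ] H} (hxM : x ∈ M) (hyM : y ∈ M) (hxy : x ≤ y) :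
    (tr.τ x).re ≤ (tr.τ y).re := by
  have := tr.re_nonneg (sub_mem hyM hxM) (sub_nonneg.2 hxy)
  rw [map_sub, Complex.sub_re] at this
  linarith

theorem re_sq_le {x : H →L[ℂ] H} (hxM : x ∈ M) (hx : IsSelfAdjoint x) :
    (tr.τ x).re ^ 2 ≤ (tr.τ (x * x)).re := by
  set r := (tr.τ x).re with hr
  have hyM : x - (r : ℂ) • 1 ∈ M := sub_mem hxM (M.toStarSubalgebra.smul_mem (one_mem M) _)
  have hy : IsSelfAdjoint (x - (r : ℂ) • 1) :=
    hx.sub (.smul (Complex.conj_ofReal r) (.one _))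
  have hexp : (x - (r : ℂ) • 1) * (x - (r : ℂ) • 1)
      = x * x - ((2 * r : ℝ) : ℂ) • x + ((r ^ 2 : ℝ) : ℂ) • 1 := by
    simp only [sub_mul, mul_sub, smul_mul_assoc, mul_smul_comm, one_mul, mul_one]
    push_cast
    module
  have := tr.re_nonneg_star_mul_self hyM
  rw [hy.star_eq, hexp] at this
  simp only [map_add, map_sub, map_smul, tr.unital, smul_eq_mul, Complex.add_re, Complex.sub_re,
    Complex.re_ofReal_mul, mul_one, Complex.ofReal_re, ← hr] at this
  linarith

theorem re_le_twoNorm {x : H →L[ℂ] H} (hxM : x ∈ M) (hx : IsSelfAdjoint x) :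
    (tr.τ x).re ≤ twoNorm H tr.τ x := by
  rw [twoNorm, hx.star_eq]
  exact (le_abs_self _).trans (Real.abs_le_sqrt (tr.re_sq_le hxM hx))

end FaithfulNormalTrace

theorem sq_max_one_rpow_neg_half_sub_one_le (t : ℝ) :
    (max 1 t ^ (-(1 / 2 : ℝ)) - 1) ^ 2 ≤ |t - 1| := by
  rcases le_or_gt t 1 with ht | ht
  · simp [max_eq_left ht]
  · rw [max_eq_right ht.le, abs_of_pos (sub_pos.2 ht)]
    have ht0 : 0 < t := one_pos.trans ht
    set u := t ^ (-(1 / 2 : ℝ))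
    have hu0 : 0 ≤ u := by positivity
    have hu1 : u ≤ 1 := Real.rpow_le_one_of_one_le_of_nonpos ht.le (by norm_num)
    have hut : u ^ 2 * t = 1 := by
      rw [← Real.rpow_natCast, ← Real.rpow_mul ht0.le, ← Real.rpow_add_one ht0.ne']
      norm_num
    have hu_sq : 1 - u ^ 2 ≤ t - 1 := by nlinarith [sq_nonneg (t - 1)]
    nlinarith

theorem powers_stormer_estimate_general
    (M : VonNeumannAlgebra H) (tr : FaithfulNormalTrace H M)
    (φ : (H →L[ℂ] H) →ₗ[ℂ] (H →L[ℂ] H)) (hφ : IsNormalCP H M φ)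
    (ainvsqrt : H →L[ℂ] H)
    (hainvsqrt : ainvsqrt = cfc (fun t : ℝ => (max 1 t) ^ (-(1 / 2 : ℝ))) (φ 1)) :
    twoNorm H tr.τ (ainvsqrt - 1) ≤ (twoNorm H tr.τ (φ 1 - 1)) ^ ((1 : ℝ) / 2) := by
  obtain ⟨hφM, -, hφcp⟩ := hφ
  have hbM : φ 1 ∈ M := hφM 1 (one_mem M)
  have hb : IsSelfAdjoint (φ 1) := by
    simpa using (hφcp.isPositive_map_star_mul_self (one_mem M)).isSelfAdjoint
  have hf : Continuous fun t : ℝ => max 1 t ^ (-(1 / 2 : ℝ)) :=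
    (continuous_const.max continuous_id).rpow_const fun t => .inl (by positivity)
  have hf₁ : Continuous fun t : ℝ => max 1 t ^ (-(1 / 2 : ℝ)) - 1 := hf.sub continuous_const
  have hu : ainvsqrt - 1 = cfc (fun t : ℝ => max 1 t ^ (-(1 / 2 : ℝ)) - 1) (φ 1) := by
    rw [cfc_sub _ _ _ hf.continuousOn, cfc_const_one ℝ (φ 1), hainvsqrt]
  have hd : φ 1 - 1 = cfc (fun t : ℝ => t - 1) (φ 1) := by
    rw [cfc_sub (fun t : ℝ => t) (fun _ => 1) (φ 1), cfc_id' ℝ (φ 1),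
      cfc_const_one ℝ (φ 1)]
  have habs :
      twoNorm H tr.τ (cfc (fun t : ℝ => |t - 1|) (φ 1)) = twoNorm H tr.τ (φ 1 - 1) := by
    rw [hd, twoNorm_cfc tr.τ (fun t => |t - 1|), twoNorm_cfc tr.τ (fun t => t - 1)]
    simp only [sq_abs]
  calc twoNorm H tr.τ (ainvsqrt - 1)
      = √(tr.τ (cfc (fun t : ℝ => (max 1 t ^ (-(1 / 2 : ℝ)) - 1) ^ 2) (φ 1))).re := by
        rw [hu, twoNorm_cfc _ _ _ hf₁.continuousOn]
    _ ≤ √(tr.τ (cfc (fun t : ℝ => |t - 1|) (φ 1))).re :=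
        Real.sqrt_le_sqrt <| tr.re_mono (M.cfc_mem _ hbM) (M.cfc_mem _ hbM) <|
          cfc_mono (fun t _ => sq_max_one_rpow_neg_half_sub_one_le t)
            (hf₁.pow 2).continuousOn
    _ ≤ √(twoNorm H tr.τ (cfc (fun t : ℝ => |t - 1|) (φ 1))) :=
        Real.sqrt_le_sqrt <| tr.re_le_twoNorm (M.cfc_mem _ hbM) (cfc_predicate _ _)
    _ = (twoNorm H tr.τ (φ 1 - 1)) ^ ((1 : ℝ) / 2) := by rw [habs, Real.sqrt_eq_rpow]

/-- **Powers–Størmer estimate.** If `a = 1 ∨ φ(1)` for a normal completely positive map `φ` on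
a finite von Neumann algebra `M` with faithful normal trace `τ`, then
`‖a^{-1/2} − 1‖₂ ≤ ‖φ(1) − 1‖₂^{1/2}`. Here `1 ∨ φ(1)` and `a^{-1/2}` are given by the
continuous functional calculus of `t ↦ max 1 t` and `t ↦ (max 1 t)^{-1/2}` applied to `φ(1)`. -/
theorem powers_stormer_estimate
    (M : VonNeumannAlgebra H) (tr : FaithfulNormalTrace H M)
    (φ : (H →L[ℂ] H) →ₗ[ℂ] (H →L[ℂ] H)) (hφ : IsNormalCP H M φ)
    (a : H →L[ℂ] H) (ha : a = cfc (fun t : ℝ => max 1 t) (φ 1))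
    (ainvsqrt : H →L[ℂ] H)
    (hainvsqrt : ainvsqrt = cfc (fun t : ℝ => (max 1 t) ^ (-(1 / 2 : ℝ))) (φ 1)) :
    twoNorm H tr.τ (ainvsqrt - 1) ≤ (twoNorm H tr.τ (φ 1 - 1)) ^ ((1 : ℝ) / 2) :=
  powers_stormer_estimate_general M tr φ hφ ainvsqrt hainvsqrt
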